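/- Let F be a field, k ≥ 1 a natural number, and G a k²×k² matrix over F, with rows and columns indexed by pairs (i,s) ∈ {1,...,k}×{1,...,k}, such that every square submatrix of G is invertible. Let m, m' : {1,...,k}×{1,...,k} → F be message vectors and set p = Gm, p' = Gm'. Fix i ∈ {1,...,k}. If m(j,k) = m'(j,k) for all j ∈ {1,...,k}, and p(j,s) = p'(j,s) for all j ≠ i and all s ∈ {1,...,k}, then m = m' (and consequently p = p'). (In other words, in the clustered code where node N(1,j) stores the message block m_j and node N(2,j) stores the parity block p_j, a failed parity node N(2,i) is exactly regenerated from the full contents of the other k−1 parity nodes together with one symbol m(j,k) from each of the k systematic nodes.) -/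

import Mathlib

/-!
Put `d = m - m'`. It vanishes on the `k` coordinates `(j, k)`, and `G d` vanishes on the
`k² - k` rows `(j, s)` with `j ≠ i`. So `d` is supported on the `k² - k` columns `(j, s)` with
`s ≠ k`, and the restriction of `d` to them is killed by the square submatrix of `G` on these
rows and columns, which is invertible; hence `d = 0`.
-/

/-- Every square submatrix of `G` is invertible: for every size `r` and every
injective choice of `r` rows and `r` columns, the corresponding `r × r`
submatrix has nonzero determinant. -/
def AllSquareSubmatricesInvertible {F : Type*} [Field F] {ι : Type*} [DecidableEq ι]
    (G : Matrix ι ι F) : Prop :=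
  ∀ (r : ℕ) (f g : Fin r → ι), Function.Injective f → Function.Injective g →
    (G.submatrix f g).det ≠ 0

open Matrix

section

variable {F : Type*} [Field F] {ι : Type*} [DecidableEq ι]

theorem AllSquareSubmatricesInvertible.det_submatrix_ne_zero {G : Matrix ι ι F}
    (hG : AllSquareSubmatricesInvertible G) {α : Type*} [Fintype α] [DecidableEq α]
    {f g : α → ι} (hf : Function.Injective f) (hg : Function.Injective g) :
    (G.submatrix f g).det ≠ 0 := by
  let e := Fintype.equivFin α
  have hsub : G.submatrix f g = (G.submatrix (f ∘ e.symm) (g ∘ e.symm)).submatrix e e := by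
    ext a b
    simp
  rw [hsub, det_submatrix_equiv_self]
  exact hG _ _ _ (hf.comp e.symm.injective) (hg.comp e.symm.injective)

theorem AllSquareSubmatricesInvertible.eq_zero_of_mulVec_apply_eq_zero [Fintype ι]
    {G : Matrix ι ι F} (hG : AllSquareSubmatricesInvertible G) {α : Type*} [Fintype α]
    {f g : α → ι} (hf : Function.Injective f) (hg : Function.Injective g) {v : ι → F}
    (hv : ∀ c ∉ Set.range g, v c = 0) (hGv : ∀ a, (G *ᵥ v) (f a) = 0) : v = 0 := by
  classical
  have hsub : G.submatrix f g *ᵥ (v ∘ g) = 0 := by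
    funext a
    rw [Pi.zero_apply, ← hGv a]
    exact Fintype.sum_of_injective g hg _ _ (fun c hc => by simp [hv c hc]) (fun _ => rfl)
  have hvg : v ∘ g = 0 := eq_zero_of_mulVec_eq_zero (hG.det_submatrix_ne_zero hf hg) hsub
  funext c
  by_cases hc : c ∈ Set.range g
  · obtain ⟨a, rfl⟩ := hc
    exact congrFun hvg a
  · exact hv c hc

end

/-- Exact regeneration of a failed parity node `N(2,i)`: in Construction 1
for the `[2k,k,2]` clustered DSS with `ε = 1/(n-k)`, the message vector (and
hence the lost parity block) is determined by the contents of the other `k-1`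
parity nodes together with the last symbol `m(j,k)` of each of the `k`
systematic nodes. -/
theorem parity_node_exact_regeneration
    {F : Type*} [Field F] {k : ℕ} (hk : 1 ≤ k)
    (G : Matrix (Fin k × Fin k) (Fin k × Fin k) F)
    (hG : AllSquareSubmatricesInvertible G)
    (m m' : Fin k × Fin k → F)
    (p p' : Fin k × Fin k → F)
    (hp : p = G.mulVec m) (hp' : p' = G.mulVec m')
    (i : Fin k)
    (hmsg : ∀ j : Fin k, m (j, ⟨k - 1, by omega⟩) = m' (j, ⟨k - 1, by omega⟩))
    (hpar : ∀ j : Fin k, j ≠ i → ∀ s : Fin k, p (j, s) = p' (j, s)) :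
    m = m' ∧ p = p' := by
  set last : Fin k := ⟨k - 1, by omega⟩
  -- Pairs the column `(j, s)`, `s ≠ last`, with the row `(swap last i s, j)`, whose block is not `i`.
  let row : {c : Fin k × Fin k // c.2 ≠ last} → Fin k × Fin k :=
    fun c => (Equiv.swap last i c.1.2, c.1.1)
  have hrow : Function.Injective row := by
    rintro ⟨⟨a, b⟩, _⟩ ⟨⟨a', b'⟩, _⟩ h
    simp_all [row]
  have hdiff : m - m' = 0 := by
    refine hG.eq_zero_of_mulVec_apply_eq_zero hrow Subtype.val_injective ?_ ?_
    · rintro ⟨j, s⟩ hc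
      obtain rfl : s = last := by_contra fun hs => hc ⟨⟨(j, s), hs⟩, rfl⟩
      simp [hmsg j]
    · rintro ⟨⟨j, s⟩, hs⟩
      have hblock : Equiv.swap last i s ≠ i := by
        rwa [Ne, Equiv.swap_apply_eq_iff, Equiv.swap_apply_right]
      rw [mulVec_sub, ← hp, ← hp', Pi.sub_apply, hpar _ hblock, sub_self]
  have hm : m = m' := sub_eq_zero.mp hdiff
  exact ⟨hm, by rw [hp, hp', hm]⟩
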